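/- Let f, g and h be entire functions given by everywhere absolutely convergent vector valued Dirichlet series, and let p ≥ 0, q ≥ 0, m ≥ 0 be integers. Assume 0 < λ_h^{(m,q)}(f) ≤ ρ_h^{(m,q)}(f) < +∞, 0 < λ_h^{(m,p)}(g) ≤ ρ_h^{(m,p)}(g) < +∞, and that the indicators Δ̄_h^{(m,q)}(f), Δ_h^{(m,p)}(g), τ̄_h^{(m,p)}(g) are all positive and finite. Then τ_g^{(p,q)}(f) ≥ max{ (Δ̄_h^{(m,q)}(f)/Δ_h^{(m,p)}(g))^{1/ρ_h^{(m,p)}(g)}, (Δ̄_h^{(m,q)}(f)/τ̄_h^{(m,p)}(g))^{1/λ_h^{(m,p)}(g)} }. -/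

import Mathlib

open Filter Topology

noncomputable section

/-- An entire function given by an everywhere absolutely convergent
vector valued Dirichlet series, with coefficients in a Banach space `E`. -/
structure VVDS (E : Type*) [NormedAddCommGroup E] [NormedSpace ℂ E] [CompleteSpace E] where
  a : ℕ → E
  lam : ℕ → ℝ
  lam_pos : ∀ n, 0 < lam n
  lam_strictMono : StrictMono lam
  lam_tendsto : Tendsto lam atTop atTop
  log_index_bound : ∃ D : ℝ, ∀ᶠ n : ℕ in atTop, Real.log (n : ℝ) / lam n ≤ D
  coeff_decay : Tendsto (fun n => Real.log ‖a n‖ / lam n) atTop atBot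
  abs_conv : ∀ s : ℂ, Summable (fun n => Real.exp (s.re * lam n) * ‖a n‖)

variable {E F G : Type*} [NormedAddCommGroup E] [NormedSpace ℂ E] [CompleteSpace E]
  [NormedAddCommGroup F] [NormedSpace ℂ F] [CompleteSpace F]
  [NormedAddCommGroup G] [NormedSpace ℂ G] [CompleteSpace G]

/-- The entire function defined by the vector valued Dirichlet series. -/
def VVDS.toFun (f : VVDS E) (s : ℂ) : E := ∑' n, Complex.exp (s * (f.lam n : ℂ)) • f.a n

/-- The maximum modulus function `M_f(σ) = sup_t ‖f(σ+it)‖`. -/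
def VVDS.M (f : VVDS E) (σ : ℝ) : ℝ := ⨆ t : ℝ, ‖f.toFun ((σ : ℂ) + (t : ℂ) * Complex.I)‖

/-- The inverse function of the maximum modulus function. -/
def VVDS.Minv (f : VVDS E) (y : ℝ) : ℝ := sInf {σ : ℝ | y ≤ f.M σ}

/-- The (p,q)-th relative Ritt order of `f` with respect to `g`. -/
def relRittOrder (p q : ℕ) (f : VVDS E) (g : VVDS F) : EReal :=
  limsup (fun σ : ℝ =>
    ((Real.log^[p] (g.Minv (f.M σ)) / Real.log^[q] σ : ℝ) : EReal)) atTop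

/-- The (p,q)-th relative Ritt lower order of `f` with respect to `g`. -/
def relRittLowerOrder (p q : ℕ) (f : VVDS E) (g : VVDS F) : EReal :=
  liminf (fun σ : ℝ =>
    ((Real.log^[p] (g.Minv (f.M σ)) / Real.log^[q] σ : ℝ) : EReal)) atTop

/-- The (p,q)-th relative Ritt type of `f` with respect to `g`. -/
def relRittType (p q : ℕ) (f : VVDS E) (g : VVDS F) : EReal :=
  limsup (fun σ : ℝ =>
    ((Real.log^[p-1] (g.Minv (f.M σ)) /
      (Real.log^[q-1] σ) ^ (relRittOrder p q f g).toReal : ℝ) : EReal)) atTop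

/-- The (p,q)-th relative Ritt lower type of `f` with respect to `g`. -/
def relRittLowerType (p q : ℕ) (f : VVDS E) (g : VVDS F) : EReal :=
  liminf (fun σ : ℝ =>
    ((Real.log^[p-1] (g.Minv (f.M σ)) /
      (Real.log^[q-1] σ) ^ (relRittOrder p q f g).toReal : ℝ) : EReal)) atTop

/-- The (p,q)-th relative Ritt weak type of `f` with respect to `g`. -/
def relRittWeakType (p q : ℕ) (f : VVDS E) (g : VVDS F) : EReal :=
  liminf (fun σ : ℝ =>
    ((Real.log^[p-1] (g.Minv (f.M σ)) /
      (Real.log^[q-1] σ) ^ (relRittLowerOrder p q f g).toReal : ℝ) : EReal)) atTop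

/-- The growth indicator `τ̄_g^{(p,q)}(f)`. -/
def relRittUpperWeakType (p q : ℕ) (f : VVDS E) (g : VVDS F) : EReal :=
  limsup (fun σ : ℝ =>
    ((Real.log^[p-1] (g.Minv (f.M σ)) /
      (Real.log^[q-1] σ) ^ (relRittLowerOrder p q f g).toReal : ℝ) : EReal)) atTop

/-!
Write `Φ = M_g⁻¹ ∘ M_f`. As `M_h⁻¹` is increasing and `M_f(σ) ≤ M_g(σ')` for some
`σ' < Φ(σ) + 1`, the lower type bound of `f` relative to `h` and an upper bound of `g` relative
to `h` give `(Δ̄ - ε) (log^[q-1] σ)^ρ_h(f) ≤ (D + ε) (log^[p-1] Φ(σ) + 1)^ρ'`, with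
`(D, ρ') = (Δ_h(g), ρ_h(g))` or `(τ̄_h(g), λ_h(g))`. Taking `ρ'`-th roots,
`log^[p-1] Φ(σ) ≳ (Δ̄/D)^(1/ρ') (log^[q-1] σ)^(ρ_h(f)/ρ')`, and `ρ_h(f)/ρ' ≥ λ_g(f)` because
`λ_g(f) ≤ ρ_h(f)/ρ_h(g) ≤ ρ_h(f)/λ_h(g)`. The first of these inequalities comes from the same
comparison, run along the `σ'` on which `g` grows at nearly its maximal rate relative to `h`.
The analytic input is Bohr's mean value estimate `‖aₙ‖ e^{σλₙ} ≤ M_f(σ)`, which makes `M_f`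
positive and unbounded.
-/

namespace Real

/-- Above `expTower k`, every argument of the `k` nested logarithms in `log^[k]` is at least `1`. -/
def expTower : ℕ → ℝ
  | 0 => 1
  | k + 1 => exp (expTower k)

lemma one_le_expTower : ∀ k, 1 ≤ expTower k
  | 0 => le_rfl
  | k + 1 => one_le_exp (zero_le_one.trans (one_le_expTower k))

lemma expTower_le_log {k : ℕ} {x : ℝ} (hx : expTower (k + 1) ≤ x) : expTower k ≤ log x :=
  (le_log_iff_exp_le ((exp_pos _).trans_le hx)).mpr hx

lemma iterate_log_le_iterate_log : ∀ (k : ℕ) {x y : ℝ}, expTower k ≤ x → x ≤ y →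
    log^[k] x ≤ log^[k] y
  | 0, _, _, _, hxy => hxy
  | k + 1, x, y, hx, hxy => by
    have hx0 : 0 < x := (exp_pos _).trans_le hx
    exact iterate_log_le_iterate_log k (expTower_le_log hx) (log_le_log hx0 hxy)

lemma log_add_le_log_add {x c : ℝ} (hx : 1 ≤ x) (hc : 0 ≤ c) : log (x + c) ≤ log x + c := by
  have hx0 : 0 < x := zero_lt_one.trans_le hx
  calc log (x + c) ≤ log (x * exp c) :=
        log_le_log (by linarith) (by nlinarith [add_one_le_exp c])
    _ = log x + c := by rw [log_mul hx0.ne' (exp_pos c).ne', log_exp]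

lemma iterate_log_add_le : ∀ (k : ℕ) {x c : ℝ}, expTower k ≤ x → 0 ≤ c →
    log^[k] (x + c) ≤ log^[k] x + c
  | 0, _, _, _, _ => le_rfl
  | k + 1, x, c, hx, hc => by
    have hx1 : 1 ≤ x := (one_le_expTower _).trans hx
    have hlog := expTower_le_log hx
    calc log^[k] (log (x + c)) ≤ log^[k] (log x + c) :=
          iterate_log_le_iterate_log k (hlog.trans (log_le_log (by linarith) (by linarith)))
            (log_add_le_log_add hx1 hc)
      _ ≤ log^[k] (log x) + c := iterate_log_add_le k hlog hc

lemma tendsto_iterate_log_atTop : ∀ k : ℕ, Tendsto log^[k] atTop atTop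
  | 0 => tendsto_id
  | k + 1 => (tendsto_iterate_log_atTop k).comp tendsto_log_atTop

lemma mul_rpow_le_of_rpow_mul_rpow_le {c x y ρ r e : ℝ} (hc : 0 < c) (hx : 1 ≤ x)
    (hy : 0 ≤ y) (hρ : 0 < ρ) (he : e ≤ r / ρ) (h : c ^ ρ * x ^ r ≤ y ^ ρ) : c * x ^ e ≤ y := by
  have hx0 : 0 ≤ x := zero_le_one.trans hx
  calc c * x ^ e ≤ c * x ^ (r / ρ) := by gcongr
    _ = (c ^ ρ * x ^ r) ^ (1 / ρ) := by
      rw [mul_rpow (by positivity) (by positivity), ← rpow_mul hc.le,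
        ← rpow_mul hx0, mul_one_div_cancel hρ.ne', rpow_one, mul_one_div]
    _ ≤ (y ^ ρ) ^ (1 / ρ) := by gcongr
    _ = y := by rw [← rpow_mul hy, mul_one_div_cancel hρ.ne', rpow_one]

end Real

open Complex in
lemma norm_integral_exp_mul_I_le {μ : ℝ} (hμ : μ ≠ 0) (T : ℝ) :
    ‖∫ t in (-T)..T, exp (μ * I * t)‖ ≤ 2 / |μ| := by
  have hμI : (μ : ℂ) * I ≠ 0 := mul_ne_zero (ofReal_ne_zero.mpr hμ) I_ne_zero
  have h_unit (t : ℝ) : ‖exp (μ * I * t)‖ = 1 := by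
    rw [norm_exp]; simp
  rw [integral_exp_mul_complex hμI, norm_div, norm_mul, norm_I, mul_one, norm_real,
    Real.norm_eq_abs]
  gcongr
  calc _ ≤ ‖exp (μ * I * T)‖ + ‖exp (μ * I * ↑(-T))‖ := norm_sub_le _ _
    _ = 2 := by rw [h_unit, h_unit]; norm_num

open Complex in
lemma norm_mean_exp_mul_I_le_one (μ : ℝ) {T : ℝ} (hT : 0 < T) :
    ‖(2 * T)⁻¹ • ∫ t in (-T)..T, exp (μ * I * t)‖ ≤ 1 := by
  have h : ‖∫ t in (-T)..T, exp (μ * I * t)‖ ≤ 1 * |T - -T| :=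
    intervalIntegral.norm_integral_le_of_norm_le_const fun t _ => by rw [norm_exp]; simp
  rw [abs_of_pos (by linarith), one_mul] at h
  rw [norm_smul, Real.norm_of_nonneg (by positivity), inv_mul_le_iff₀ (by positivity)]
  linarith

open Complex in
lemma tendsto_mean_exp_mul_I (μ : ℝ) :
    Tendsto (fun T : ℝ => (2 * T)⁻¹ • ∫ t in (-T)..T, exp (μ * I * t)) atTop
      (𝓝 (if μ = 0 then 1 else 0)) := by
  split_ifs with hμ
  · refine tendsto_const_nhds.congr' ((eventually_gt_atTop 0).mono fun T hT => ?_)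
    simp only [hμ, ofReal_zero, zero_mul, exp_zero, intervalIntegral.integral_const, smul_smul]
    rw [show T - -T = 2 * T by ring, inv_mul_cancel₀ (by positivity), one_smul]
  · have h_decay : Tendsto (fun T : ℝ => (2 * T)⁻¹ * (2 / |μ|)) atTop (𝓝 0) := by
      simpa using ((tendsto_inv_atTop_zero.comp (tendsto_id.const_mul_atTop two_pos)).mul_const
        (2 / |μ|))
    refine squeeze_zero_norm' ((eventually_gt_atTop 0).mono fun T hT => ?_) h_decay
    rw [norm_smul, Real.norm_of_nonneg (by positivity)]
    gcongr
    exact norm_integral_exp_mul_I_le hμ T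

namespace EReal

lemma lt_coe_of_toReal_lt {x : EReal} {d : ℝ} (hx : x ≠ ⊤) (h : x.toReal < d) : x < d :=
  (le_coe_toReal hx).trans_lt (EReal.coe_lt_coe_iff.mpr h)

lemma coe_lt_of_lt_toReal {x : EReal} {d : ℝ} (hx : x ≠ ⊥) (h : d < x.toReal) :
    (d : EReal) < x :=
  (EReal.coe_lt_coe_iff.mpr h).trans_le (coe_toReal_le hx)

lemma toReal_le_of_le_coe {x : EReal} {d : ℝ} (h : x ≤ d) (hd : 0 ≤ d) : x.toReal ≤ d := by
  induction x using EReal.rec with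
  | bot => exact hd
  | coe x => exact_mod_cast h
  | top => exact absurd h (by simp)

end EReal

section RatioLimits

variable {α : Type*} {l : Filter α} {u v : α → ℝ} {c : ℝ}

lemma eventually_mul_le_of_lt_liminf_div (hv : ∀ᶠ x in l, 0 < v x)
    (h : (c : EReal) < liminf (fun x => ((u x / v x : ℝ) : EReal)) l) :
    ∀ᶠ x in l, c * v x ≤ u x := by
  filter_upwards [eventually_lt_of_lt_liminf h, hv] with x hx hvx
  exact ((lt_div_iff₀ hvx).mp (EReal.coe_lt_coe_iff.mp hx)).le

lemma eventually_le_mul_of_limsup_div_lt (hv : ∀ᶠ x in l, 0 < v x)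
    (h : limsup (fun x => ((u x / v x : ℝ) : EReal)) l < c) :
    ∀ᶠ x in l, u x ≤ c * v x := by
  filter_upwards [eventually_lt_of_limsup_lt h, hv] with x hx hvx
  exact ((div_lt_iff₀ hvx).mp (EReal.coe_lt_coe_iff.mp hx)).le

lemma frequently_mul_le_of_lt_limsup_div (hv : ∀ᶠ x in l, 0 < v x)
    (h : (c : EReal) < limsup (fun x => ((u x / v x : ℝ) : EReal)) l) :
    ∃ᶠ x in l, c * v x ≤ u x := by
  refine ((frequently_lt_of_lt_limsup (by isBoundedDefault) h).and_eventually hv).mono ?_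
  rintro x ⟨hx, hvx⟩
  exact ((lt_div_iff₀ hvx).mp (EReal.coe_lt_coe_iff.mp hx)).le

lemma liminf_div_le_of_frequently_le_mul_add (hv : Tendsto v l atTop) {a C : ℝ}
    (h : ∀ r > a, ∃ᶠ x in l, u x ≤ r * (v x + C)) :
    liminf (fun x => ((u x / v x : ℝ) : EReal)) l ≤ a := by
  refine EReal.le_of_forall_lt_iff_le.mp fun w hw => ?_
  obtain ⟨r, har, hrw⟩ := exists_between (EReal.coe_lt_coe_iff.mp hw)
  refine liminf_le_of_frequently_le' (((h r har).and_eventually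
    ((hv.eventually_gt_atTop 0).and (hv.eventually_ge_atTop (r * C / (w - r))))).mono ?_)
  rintro x ⟨hux, hvx, hvC⟩
  rw [div_le_iff₀ (sub_pos.mpr hrw)] at hvC
  exact EReal.coe_le_coe_iff.mpr ((div_le_iff₀ hvx).mpr (by nlinarith))

/-- Where `v` is small, `u → ∞` alone gives `w ≤ u / v`; where `v` is large, the additive `1` is
absorbed by the gap between `w` and `c`. -/
lemma le_liminf_div_of_eventually_mul_le_add_one (hu : Tendsto u l atTop)
    (hv : ∀ᶠ x in l, 0 < v x) (h : ∀ c' < c, ∀ᶠ x in l, c' * v x ≤ u x + 1) :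
    (c : EReal) ≤ liminf (fun x => ((u x / v x : ℝ) : EReal)) l := by
  refine EReal.ge_of_forall_gt_iff_ge.mp fun w hw => ?_
  obtain ⟨c', hwc', hc'c⟩ := exists_between (EReal.coe_lt_coe_iff.mp hw)
  have hgap : 0 < c' - w := sub_pos.mpr hwc'
  refine le_liminf_of_le (by isBoundedDefault) ?_
  filter_upwards [h c' hc'c, hv, hu.eventually_ge_atTop (|w| / (c' - w)),
    hu.eventually_ge_atTop 0] with x hcx hvx hux hu0
  refine EReal.coe_le_coe_iff.mpr ((le_div_iff₀ hvx).mpr ?_)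
  rw [div_le_iff₀ hgap] at hux
  rcases le_or_gt 1 ((c' - w) * v x) with hlarge | hsmall
  · nlinarith
  · nlinarith [le_abs_self w, abs_nonneg w]

end RatioLimits

namespace VVDS

variable (f : VVDS E)

lemma norm_exp_smul_coeff (s : ℂ) (n : ℕ) :
    ‖Complex.exp (s * f.lam n) • f.a n‖ = Real.exp (s.re * f.lam n) * ‖f.a n‖ := by
  rw [norm_smul, Complex.norm_exp, Complex.re_mul_ofReal]

lemma summable_norm_exp_smul_coeff (s : ℂ) :
    Summable fun n => ‖Complex.exp (s * f.lam n) • f.a n‖ := by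
  simpa only [norm_exp_smul_coeff] using f.abs_conv s

lemma summable_exp_smul_coeff (s : ℂ) : Summable fun n => Complex.exp (s * f.lam n) • f.a n :=
  (f.summable_norm_exp_smul_coeff s).of_norm

def majorant (σ : ℝ) : ℝ := ∑' n, Real.exp (σ * f.lam n) * ‖f.a n‖

lemma summable_majorant (σ : ℝ) : Summable fun n => Real.exp (σ * f.lam n) * ‖f.a n‖ := by
  simpa using f.abs_conv σ

lemma norm_toFun_le_majorant (s : ℂ) : ‖f.toFun s‖ ≤ f.majorant s.re := by
  simpa only [toFun, majorant, norm_exp_smul_coeff] using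
    norm_tsum_le_tsum_norm (f.summable_norm_exp_smul_coeff s)

lemma majorant_mono : Monotone f.majorant := fun σ τ hστ =>
  Summable.tsum_le_tsum (fun n => by gcongr; exact (f.lam_pos n).le)
    (f.summable_majorant σ) (f.summable_majorant τ)

lemma tendsto_majorant_atBot : Tendsto f.majorant atBot (𝓝 0) := by
  have h := tendsto_tsum_of_dominated_convergence (𝓕 := atBot) (f.summable_majorant 0)
    (f := fun σ n => Real.exp (σ * f.lam n) * ‖f.a n‖) (g := fun _ => 0)
    (fun n => by
      simpa using ((Real.tendsto_exp_atBot.comp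
        (tendsto_id.atBot_mul_const (f.lam_pos n))).mul_const ‖f.a n‖))
    ((eventually_le_atBot 0).mono fun σ hσ n => by
      rw [Real.norm_of_nonneg (by positivity)]
      gcongr
      nlinarith [f.lam_pos n])
  rw [tsum_zero] at h
  exact h

lemma norm_toFun_le_M (σ t : ℝ) : ‖f.toFun (σ + t * Complex.I)‖ ≤ f.M σ :=
  le_ciSup ⟨f.majorant σ, by
    rintro _ ⟨t, rfl⟩
    simpa using f.norm_toFun_le_majorant (σ + t * Complex.I)⟩ t

lemma M_le_majorant (σ : ℝ) : f.M σ ≤ f.majorant σ :=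
  ciSup_le fun t => by simpa using f.norm_toFun_le_majorant (σ + t * Complex.I)

open Complex in
lemma hasSum_integral_exp_smul_toFun (σ ℓ T : ℝ) :
    HasSum
      (fun n => (∫ t in (-T)..T, exp ((f.lam n - ℓ : ℝ) * I * t)) • (exp (σ * f.lam n) • f.a n))
      (∫ t in (-T)..T, exp (-ℓ * I * t) • f.toFun (σ + t * I)) := by
  have h_term (n : ℕ) (t : ℝ) : exp (-ℓ * I * t) • (exp ((σ + t * I) * f.lam n) • f.a n)
      = exp ((f.lam n - ℓ : ℝ) * I * t) • (exp (σ * f.lam n) • f.a n) := by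
    rw [smul_smul, smul_smul, ← exp_add, ← exp_add]
    push_cast
    ring_nf
  simp only [← intervalIntegral.integral_smul_const, ← h_term]
  refine intervalIntegral.hasSum_integral_of_dominated_convergence
    (fun n _ => Real.exp (σ * f.lam n) * ‖f.a n‖) (fun n => Continuous.aestronglyMeasurable
      (by fun_prop)) (fun n => MeasureTheory.ae_of_all _ fun t _ => ?_)
    (MeasureTheory.ae_of_all _ fun _ _ => f.summable_majorant σ) intervalIntegrable_const
    (MeasureTheory.ae_of_all _ fun t _ => (f.summable_exp_smul_coeff _).hasSum.const_smul _)
  rw [norm_smul, norm_exp_smul_coeff, norm_exp]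
  simp

open Complex in
/-- Bohr's mean value formula: averaging `e^{-iλₙ₀ t} f(σ + it)` over `[-T, T]` isolates the
`n₀`-th term as `T → ∞`, so it is bounded by the maximum modulus. -/
lemma exp_mul_norm_coeff_le_M (σ : ℝ) (n₀ : ℕ) :
    Real.exp (σ * f.lam n₀) * ‖f.a n₀‖ ≤ f.M σ := by
  set b : ℕ → E := fun n => exp (σ * f.lam n) • f.a n
  set avg : ℝ → E := fun T =>
    (2 * T)⁻¹ • ∫ t in (-T)..T, exp (-f.lam n₀ * I * t) • f.toFun (σ + t * I)
  have h_avg (T : ℝ) : avg T =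
      ∑' n, ((2 * T)⁻¹ • ∫ t in (-T)..T, exp ((f.lam n - f.lam n₀ : ℝ) * I * t)) • b n := by
    simp only [avg, b, smul_assoc]
    exact ((f.hasSum_integral_exp_smul_toFun σ (f.lam n₀) T).const_smul (2 * T)⁻¹).tsum_eq.symm
  have h_lim : Tendsto avg atTop (𝓝 (b n₀)) := by
    have h := tendsto_tsum_of_dominated_convergence (𝓕 := atTop) (bound := fun n => ‖b n‖)
      (f.summable_norm_exp_smul_coeff σ)
      (fun n => ((tendsto_mean_exp_mul_I (f.lam n - f.lam n₀)).smul_const (b n)))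
      ((eventually_gt_atTop 0).mono fun T hT n => by
        rw [norm_smul]
        exact mul_le_of_le_one_left (norm_nonneg _) (norm_mean_exp_mul_I_le_one _ hT))
    simp only [sub_eq_zero, ite_smul, one_smul, zero_smul,
      (f.lam_strictMono.injective.eq_iff), tsum_ite_eq] at h
    exact h.congr fun T => (h_avg T).symm
  have h_bound : ∀ᶠ T in atTop, ‖avg T‖ ≤ f.M σ := (eventually_gt_atTop 0).mono fun T hT => by
    have h : ‖∫ t in (-T)..T, exp (-f.lam n₀ * I * t) • f.toFun (σ + t * I)‖ ≤
        f.M σ * |T - -T| := intervalIntegral.norm_integral_le_of_norm_le_const fun t _ => by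
      rw [norm_smul, norm_exp]
      simpa using f.norm_toFun_le_M σ t
    rw [abs_of_pos (by linarith)] at h
    rw [norm_smul, Real.norm_of_nonneg (by positivity), inv_mul_le_iff₀ (by positivity)]
    linarith
  simpa [b, norm_exp_smul_coeff] using le_of_tendsto (tendsto_norm.comp h_lim) h_bound

lemma exists_coeff_ne_zero : ∃ n, f.a n ≠ 0 := by
  obtain ⟨n, hn⟩ := (f.coeff_decay.eventually (eventually_lt_atBot 0)).exists
  exact ⟨n, fun h => by simp [h] at hn⟩

lemma M_pos (σ : ℝ) : 0 < f.M σ := by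
  obtain ⟨n₀, hn₀⟩ := f.exists_coeff_ne_zero
  exact (mul_pos (Real.exp_pos _) (norm_pos_iff.mpr hn₀)).trans_le
    (f.exp_mul_norm_coeff_le_M σ n₀)

lemma tendsto_M_atTop : Tendsto f.M atTop atTop := by
  obtain ⟨n₀, hn₀⟩ := f.exists_coeff_ne_zero
  refine tendsto_atTop_mono (f.exp_mul_norm_coeff_le_M · n₀) ?_
  exact (Real.tendsto_exp_atTop.comp (tendsto_id.atTop_mul_const (f.lam_pos n₀)))
    |>.atTop_mul_const (norm_pos_iff.mpr hn₀)

variable {y y' σ : ℝ}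

lemma bddBelow_setOf_le_M (hy : 0 < y) : BddBelow {σ | y ≤ f.M σ} := by
  obtain ⟨σ₀, hσ₀⟩ := eventually_atBot.mp
    ((f.tendsto_majorant_atBot.eventually (eventually_lt_nhds hy)))
  refine ⟨σ₀, fun σ hσ => not_lt.mp fun hlt => ?_⟩
  exact (lt_of_le_of_lt (f.M_le_majorant σ) (hσ₀ σ hlt.le)).not_ge hσ

lemma nonempty_setOf_le_M (y : ℝ) : {σ | y ≤ f.M σ}.Nonempty :=
  (f.tendsto_M_atTop.eventually_ge_atTop y).exists

lemma Minv_le (hy : 0 < y) (hσ : y ≤ f.M σ) : f.Minv y ≤ σ :=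
  csInf_le (f.bddBelow_setOf_le_M hy) hσ

lemma M_lt_of_lt_Minv (hy : 0 < y) (hσ : σ < f.Minv y) : f.M σ < y :=
  not_le.mp fun h => (f.Minv_le hy h).not_gt hσ

lemma Minv_mono (hy : 0 < y) (hyy' : y ≤ y') : f.Minv y ≤ f.Minv y' :=
  csInf_le_csInf (f.bddBelow_setOf_le_M hy) (f.nonempty_setOf_le_M y') fun _ hσ => hyy'.trans hσ

lemma exists_le_M_lt_Minv_add (y : ℝ) {δ : ℝ} (hδ : 0 < δ) :
    ∃ σ, y ≤ f.M σ ∧ σ < f.Minv y + δ :=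
  exists_lt_of_csInf_lt (f.nonempty_setOf_le_M y) (lt_add_of_pos_right _ hδ)

lemma tendsto_Minv_atTop : Tendsto f.Minv atTop atTop := by
  refine tendsto_atTop_atTop.mpr fun b => ⟨f.majorant b + 1, fun y hy => ?_⟩
  refine le_csInf (f.nonempty_setOf_le_M y) fun σ hσ => not_lt.mp fun hlt => ?_
  linarith [f.M_le_majorant σ, f.majorant_mono hlt.le, hσ.out]

end VVDS

section RelativeGrowth

open Real

variable {f : VVDS E} {g : VVDS F} {h : VVDS G}

lemma eventually_iterate_log_pos (k : ℕ) : ∀ᶠ σ : ℝ in atTop, 0 < log^[k] σ :=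
  (tendsto_iterate_log_atTop k).eventually_gt_atTop 0

lemma eventually_rpow_iterate_log_pos (k : ℕ) (ρ : ℝ) :
    ∀ᶠ σ : ℝ in atTop, 0 < (log^[k] σ) ^ ρ :=
  (eventually_iterate_log_pos k).mono fun _ hσ => rpow_pos_of_pos hσ ρ

lemma tendsto_Minv_M_atTop (f : VVDS E) (g : VVDS F) :
    Tendsto (fun σ => g.Minv (f.M σ)) atTop atTop :=
  g.tendsto_Minv_atTop.comp f.tendsto_M_atTop

/-- Comparing `M_f(σ)` with `M_g(σ')` for some `σ'` just above `M_g⁻¹(M_f(σ))` transfers a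
growth bound of `g` relative to `h` into one for `f` relative to `h`. -/
lemma eventually_iterate_log_Minv_M_le {j k : ℕ} {D ρ : ℝ} (hD : 0 ≤ D) (hρ : 0 ≤ ρ)
    (hg : ∀ᶠ σ in atTop, log^[k] (h.Minv (g.M σ)) ≤ D * (log^[j] σ) ^ ρ) :
    ∀ᶠ σ in atTop, log^[k] (h.Minv (f.M σ)) ≤ D * (log^[j] (g.Minv (f.M σ)) + 1) ^ ρ := by
  obtain ⟨T, hT⟩ := eventually_atTop.mp (hg.and (eventually_iterate_log_pos j))
  filter_upwards [(tendsto_Minv_M_atTop f g).eventually_ge_atTop (max T (expTower j)),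
    (tendsto_Minv_M_atTop f h).eventually_ge_atTop (expTower k)] with σ hσ hσh
  obtain ⟨σ', hMσ', hσ'⟩ := g.exists_le_M_lt_Minv_add (f.M σ) one_pos
  have hΦσ' : g.Minv (f.M σ) ≤ σ' := g.Minv_le (f.M_pos σ) hMσ'
  have hσ'T : T ≤ σ' := (le_of_max_le_left hσ).trans hΦσ'
  calc log^[k] (h.Minv (f.M σ)) ≤ log^[k] (h.Minv (g.M σ')) :=
        iterate_log_le_iterate_log k hσh (h.Minv_mono (f.M_pos σ) hMσ')
    _ ≤ D * (log^[j] σ') ^ ρ := (hT σ' hσ'T).1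
    _ ≤ D * (log^[j] (g.Minv (f.M σ)) + 1) ^ ρ := by
      have hjΦ := le_of_max_le_right hσ
      gcongr
      · exact (hT σ' hσ'T).2.le
      calc log^[j] σ' ≤ log^[j] (g.Minv (f.M σ) + 1) :=
            iterate_log_le_iterate_log j (hjΦ.trans hΦσ') hσ'.le
        _ ≤ log^[j] (g.Minv (f.M σ)) + 1 :=
            iterate_log_add_le j hjΦ zero_le_one

/-- Choosing `σ` just below `M_f⁻¹(M_g(σ'))` along the `σ'` where `g` grows fast relative to
`h` shows that `f` is frequently slow relative to `g`. -/
lemma frequently_iterate_log_Minv_M_le {p q m : ℕ} {c d : ℝ} (hc : 0 < c) (hd : 0 ≤ d)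
    (hf : ∀ᶠ σ in atTop, log^[m] (h.Minv (f.M σ)) ≤ d * log^[q] σ)
    (hg : ∃ᶠ σ in atTop, c * log^[p] σ ≤ log^[m] (h.Minv (g.M σ))) :
    ∃ᶠ σ in atTop, log^[p] (g.Minv (f.M σ)) ≤ d / c * (log^[q] σ + 2) := by
  obtain ⟨T, hT⟩ := eventually_atTop.mp hf
  have hσ_lim : Tendsto (fun σ' => f.Minv (g.M σ') - 1) atTop atTop :=
    tendsto_atTop_add_const_right _ (-1) (tendsto_Minv_M_atTop g f)
  refine frequently_atTop.mpr fun R => ?_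
  obtain ⟨σ', hσ'c, hσ'R, hΦ, hhg⟩ := (hg.and_eventually
    ((hσ_lim.eventually_ge_atTop (max R (max T (expTower q)))).and
    ((((tendsto_Minv_M_atTop f g).comp hσ_lim).eventually_ge_atTop (expTower p)).and
    ((tendsto_Minv_M_atTop g h).eventually_ge_atTop (expTower m))))).exists
  set σ := f.Minv (g.M σ') - 1
  obtain ⟨hRσ, hTσ, hqσ⟩ : R ≤ σ ∧ T ≤ σ ∧ expTower q ≤ σ := by
    simpa only [max_le_iff] using hσ'R
  refine ⟨σ, hRσ, ?_⟩
  obtain ⟨σp, hMσp, hσp⟩ := f.exists_le_M_lt_Minv_add (g.M σ') one_pos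
  have hσσp : σ + 1 ≤ σp := by simpa [σ] using f.Minv_le (g.M_pos σ') hMσp
  have hΦσ' : g.Minv (f.M σ) ≤ σ' :=
    g.Minv_le (f.M_pos σ) (f.M_lt_of_lt_Minv (g.M_pos σ') (by simp [σ])).le
  have hchain : c * log^[p] (g.Minv (f.M σ)) ≤ d * (log^[q] σ + 2) :=
    calc c * log^[p] (g.Minv (f.M σ)) ≤ c * log^[p] σ' := by
          gcongr; exact iterate_log_le_iterate_log p hΦ hΦσ'
      _ ≤ log^[m] (h.Minv (g.M σ')) := hσ'c
      _ ≤ log^[m] (h.Minv (f.M σp)) :=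
          iterate_log_le_iterate_log m hhg (h.Minv_mono (g.M_pos σ') hMσp)
      _ ≤ d * log^[q] σp := hT σp (by linarith)
      _ ≤ d * (log^[q] σ + 2) := by
          gcongr
          calc log^[q] σp ≤ log^[q] (σ + 2) :=
                iterate_log_le_iterate_log q (by linarith) (by simp only [σ] at hσp ⊢; linarith)
            _ ≤ log^[q] σ + 2 := iterate_log_add_le q hqσ zero_le_two
  rw [div_mul_eq_mul_div, le_div_iff₀ hc]
  linarith

section GrowthIndicators

variable {p q : ℕ} {a d : ℝ}

lemma eventually_mul_rpow_le_of_lt_relRittLowerType (ha : a < relRittLowerType p q f g) :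
    ∀ᶠ σ in atTop, a * (log^[q-1] σ) ^ (relRittOrder p q f g).toReal ≤
      log^[p-1] (g.Minv (f.M σ)) :=
  eventually_mul_le_of_lt_liminf_div (eventually_rpow_iterate_log_pos _ _) ha

lemma eventually_le_mul_rpow_of_relRittType_lt (hd : relRittType p q f g < d) :
    ∀ᶠ σ in atTop, log^[p-1] (g.Minv (f.M σ)) ≤
      d * (log^[q-1] σ) ^ (relRittOrder p q f g).toReal :=
  eventually_le_mul_of_limsup_div_lt (eventually_rpow_iterate_log_pos _ _) hd

lemma eventually_le_mul_rpow_of_relRittUpperWeakType_lt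
    (hd : relRittUpperWeakType p q f g < d) :
    ∀ᶠ σ in atTop, log^[p-1] (g.Minv (f.M σ)) ≤
      d * (log^[q-1] σ) ^ (relRittLowerOrder p q f g).toReal :=
  eventually_le_mul_of_limsup_div_lt (eventually_rpow_iterate_log_pos _ _) hd

lemma eventually_le_mul_of_relRittOrder_lt (hd : relRittOrder p q f g < d) :
    ∀ᶠ σ in atTop, log^[p] (g.Minv (f.M σ)) ≤ d * log^[q] σ :=
  eventually_le_mul_of_limsup_div_lt (eventually_iterate_log_pos q) hd

lemma frequently_mul_le_of_lt_relRittOrder (ha : a < relRittOrder p q f g) :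
    ∃ᶠ σ in atTop, a * log^[q] σ ≤ log^[p] (g.Minv (f.M σ)) :=
  frequently_mul_le_of_lt_limsup_div (eventually_iterate_log_pos q) ha

end GrowthIndicators

lemma relRittLowerOrder_le_div {p q m : ℕ} (hf₀ : 0 ≤ relRittOrder m q f h)
    (hf : relRittOrder m q f h ≠ ⊤) (hg₀ : 0 < relRittOrder m p g h)
    (hg : relRittOrder m p g h ≠ ⊤) :
    relRittLowerOrder p q f g ≤
      ((relRittOrder m q f h).toReal / (relRittOrder m p g h).toReal : ℝ) := by
  have hrf := EReal.toReal_nonneg hf₀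
  have hrg := EReal.toReal_pos hg₀ hg
  refine liminf_div_le_of_frequently_le_mul_add (C := 2) (tendsto_iterate_log_atTop q)
    fun r hr => ?_
  have hr₀ : 0 < r := (div_nonneg hrf hrg.le).trans_lt hr
  obtain ⟨d, hfd, hdr⟩ := exists_between ((div_lt_iff₀ hrg).mp hr)
  have hd₀ : 0 < d := hrf.trans_lt hfd
  have h := frequently_iterate_log_Minv_M_le (div_pos hd₀ hr₀) hd₀.le
    (eventually_le_mul_of_relRittOrder_lt (EReal.lt_coe_of_toReal_lt hf hfd))
    (frequently_mul_le_of_lt_relRittOrder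
      (EReal.coe_lt_of_lt_toReal hg₀.ne_bot ((div_lt_iff₀ hr₀).mpr (by linarith))))
  rwa [div_div_cancel₀ hd₀.ne'] at h

lemma coe_rpow_div_le_relRittWeakType {p q m : ℕ} {A D ρ rf : ℝ} (hA : 0 ≤ A) (hD : 0 < D)
    (hρ : 0 < ρ) (hlam : (relRittLowerOrder p q f g).toReal ≤ rf / ρ)
    (hfA : ∀ a < A, ∀ᶠ σ in atTop, a * (log^[q-1] σ) ^ rf ≤ log^[m-1] (h.Minv (f.M σ)))
    (hgD : ∀ d > D, ∀ᶠ σ in atTop, log^[m-1] (h.Minv (g.M σ)) ≤ d * (log^[p-1] σ) ^ ρ) :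
    (((A / D) ^ (1 / ρ) : ℝ) : EReal) ≤ relRittWeakType p q f g := by
  have hu : Tendsto (fun σ => log^[p-1] (g.Minv (f.M σ))) atTop atTop :=
    (tendsto_iterate_log_atTop (p-1)).comp (tendsto_Minv_M_atTop f g)
  refine le_liminf_div_of_eventually_mul_le_add_one hu (eventually_rpow_iterate_log_pos _ _)
    fun c hc => ?_
  rcases le_or_gt c 0 with hc₀ | hc₀
  · filter_upwards [hu.eventually_ge_atTop 0, eventually_rpow_iterate_log_pos (q-1)
      (relRittLowerOrder p q f g).toReal] with σ hσ hσ'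
    nlinarith
  have hcρ : c ^ ρ * D < A := by
    have h := rpow_lt_rpow hc₀.le hc hρ
    rwa [← rpow_mul (div_nonneg hA hD.le), one_div_mul_cancel hρ.ne', rpow_one,
      lt_div_iff₀ hD] at h
  obtain ⟨d, hDd, hdA⟩ := exists_between ((lt_div_iff₀' (rpow_pos_of_pos hc₀ ρ)).mpr hcρ)
  have hd₀ : 0 < d := hD.trans hDd
  filter_upwards [hfA (c ^ ρ * d) ((lt_div_iff₀' (rpow_pos_of_pos hc₀ ρ)).mp hdA),
    eventually_iterate_log_Minv_M_le (f := f) hd₀.le hρ.le (hgD d hDd),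
    (tendsto_iterate_log_atTop (q-1)).eventually_ge_atTop 1, hu.eventually_ge_atTop 0]
    with σ hfσ hgσ hσ₁ hu₀
  refine mul_rpow_le_of_rpow_mul_rpow_le hc₀ hσ₁ (by linarith) hρ hlam ?_
  have := hfσ.trans hgσ
  refine le_of_mul_le_mul_left ?_ hd₀
  linarith

end RelativeGrowth

theorem stmt_13_general (f : VVDS E) (g : VVDS F) (h : VVDS G) (p q m : ℕ)
    (hf1 : (0 : EReal) < relRittLowerOrder m q f h)
    (hf2 : relRittLowerOrder m q f h ≤ relRittOrder m q f h)
    (hf3 : relRittOrder m q f h < ⊤)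
    (hg1 : (0 : EReal) < relRittLowerOrder m p g h)
    (hg2 : relRittLowerOrder m p g h ≤ relRittOrder m p g h)
    (hg3 : relRittOrder m p g h < ⊤)
    (hDbf1 : (0 : EReal) < relRittLowerType m q f h)
    (hDg1 : (0 : EReal) < relRittType m p g h)
    (hDg2 : relRittType m p g h < ⊤)
    (htbg1 : (0 : EReal) < relRittUpperWeakType m p g h)
    (htbg2 : relRittUpperWeakType m p g h < ⊤)
    :
    ((max (((relRittLowerType m q f h).toReal / (relRittType m p g h).toReal) ^ (1 / (relRittOrder m p g h).toReal)) (((relRittLowerType m q f h).toReal / (relRittUpperWeakType m p g h).toReal) ^ (1 / (relRittLowerOrder m p g h).toReal)) : ℝ) : EReal) ≤ relRittWeakType p q f g := by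
  have hf₀ : 0 ≤ relRittOrder m q f h := hf1.le.trans hf2
  have hg₀ : 0 < relRittOrder m p g h := hg1.trans_le hg2
  have hrg := EReal.toReal_pos hg₀ hg3.ne
  have hlg := EReal.toReal_pos hg1 (hg2.trans_lt hg3).ne
  have hlam := EReal.toReal_le_of_le_coe (relRittLowerOrder_le_div hf₀ hf3.ne hg₀ hg3.ne)
    (div_nonneg (EReal.toReal_nonneg hf₀) hrg.le)
  have hfA := fun (a : ℝ) (ha : a < (relRittLowerType m q f h).toReal) =>
    eventually_mul_rpow_le_of_lt_relRittLowerType (EReal.coe_lt_of_lt_toReal hDbf1.ne_bot ha)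
  have hA := EReal.toReal_nonneg hDbf1.le
  refine EReal.coe_strictMono.monotone.map_max.trans_le (max_le ?_ ?_)
  · exact coe_rpow_div_le_relRittWeakType hA (EReal.toReal_pos hDg1 hDg2.ne) hrg hlam hfA
      fun d hd => eventually_le_mul_rpow_of_relRittType_lt (EReal.lt_coe_of_toReal_lt hDg2.ne hd)
  · have hlg_rg := EReal.toReal_le_toReal hg2 hg1.ne_bot hg3.ne
    exact coe_rpow_div_le_relRittWeakType hA (EReal.toReal_pos htbg1 htbg2.ne) hlg
      (hlam.trans (div_le_div_of_nonneg_left (EReal.toReal_nonneg hf₀) hlg hlg_rg)) hfA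
      fun d hd => eventually_le_mul_rpow_of_relRittUpperWeakType_lt
        (EReal.lt_coe_of_toReal_lt htbg2.ne hd)

theorem stmt_13 (f : VVDS E) (g : VVDS F) (h : VVDS G) (p q m : ℕ)
    (hf1 : (0 : EReal) < relRittLowerOrder m q f h)
    (hf2 : relRittLowerOrder m q f h ≤ relRittOrder m q f h)
    (hf3 : relRittOrder m q f h < ⊤)
    (hg1 : (0 : EReal) < relRittLowerOrder m p g h)
    (hg2 : relRittLowerOrder m p g h ≤ relRittOrder m p g h)
    (hg3 : relRittOrder m p g h < ⊤)
    (hDbf1 : (0 : EReal) < relRittLowerType m q f h)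
    (hDbf2 : relRittLowerType m q f h < ⊤)
    (hDg1 : (0 : EReal) < relRittType m p g h)
    (hDg2 : relRittType m p g h < ⊤)
    (htbg1 : (0 : EReal) < relRittUpperWeakType m p g h)
    (htbg2 : relRittUpperWeakType m p g h < ⊤)
    :
    ((max (((relRittLowerType m q f h).toReal / (relRittType m p g h).toReal) ^ (1 / (relRittOrder m p g h).toReal)) (((relRittLowerType m q f h).toReal / (relRittUpperWeakType m p g h).toReal) ^ (1 / (relRittLowerOrder m p g h).toReal)) : ℝ) : EReal) ≤ relRittWeakType p q f g :=
  stmt_13_general f g h p q m hf1 hf2 hf3 hg1 hg2 hg3 hDbf1 hDg1 hDg2 htbg1 htbg2
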